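/- arXiv:1108.4887 — 2 statements merged into one kernel-verified Lean document; each statement's English description precedes it below -/
import Mathlib

section
/- There exists an absolute constant c' > 0 such that: for all η > 0 and ε > 0 with ε < 1 − 3η there exists T₀ > 0 (depending only on η, ε) such that for every T ≥ T₀, every A ∈ SL(2,ℝ) with ‖A − I‖∞ ≤ T^{-(2η+ε)}, and every u ∈ [0, T^η], there exist real numbers t', y', θ' with |t'| ≤ c'T^{-ε}, |y'| ≤ c'T^{-ε}, |θ'| ≤ c'T^{-ε} and ω(u)^{-1}·A·ω(u) = n(t')·a(y')·K(θ'). (Slow divergence of the approximate horocycle {(-1+i/T)t}.) -/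
open Real Matrix

/-- `n t = [[1, t], [0, 1]]`. -/
noncomputable def n (t : ℝ) : Matrix (Fin 2) (Fin 2) ℝ := !![1, t; 0, 1]

/-- `a y = [[e^{y/2}, 0], [0, e^{-y/2}]]`. -/
noncomputable def a (y : ℝ) : Matrix (Fin 2) (Fin 2) ℝ :=
  !![Real.exp (y / 2), 0; 0, Real.exp (-y / 2)]

/-- `K θ = [[cos θ, sin θ], [-sin θ, cos θ]]`. -/
noncomputable def K (θ : ℝ) : Matrix (Fin 2) (Fin 2) ℝ :=
  !![Real.cos θ, Real.sin θ; -Real.sin θ, Real.cos θ]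

/-- The maximum of the absolute values of the entries of a real 2×2 matrix. -/
noncomputable def mnorm (M : Matrix (Fin 2) (Fin 2) ℝ) : ℝ :=
  max (max |M 0 0| |M 0 1|) (max |M 1 0| |M 1 1|)

/-- `ω T u = [[(1+u/T)^{1/2}, -u(1+u/T)^{-1/2}], [0, (1+u/T)^{-1/2}]]`. -/
noncomputable def ω (T u : ℝ) : Matrix (Fin 2) (Fin 2) ℝ :=
  !![(1 + u / T) ^ ((1 : ℝ) / 2), -u * (1 + u / T) ^ (-(1 : ℝ) / 2);
     0, (1 + u / T) ^ (-(1 : ℝ) / 2)]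

/-! For `0 ≤ u ≤ T ^ η` the entries of `ω T u` are at most `1 + u ≤ 2 T ^ η`, and since `ω T u` has
determinant one its inverse is its adjugate, with the same entries up to sign. Conjugation by `ω T u`
therefore enlarges `‖A - 1‖∞` by at most a factor `16 T ^ (2 η)`, so `B = (ω T u)⁻¹ A ω T u` lies
within `16 T ^ (-ε)` of the identity. Near the identity the Iwasawa coordinates of `B = !![p, q; c, d]`
are explicit, `θ = arctan (-c / d)`, `y = -log (c ^ 2 + d ^ 2)`, `t = (p c + q d) / (c ^ 2 + d ^ 2)`,
and each is bounded by a constant times `‖B - 1‖∞`. -/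

lemma abs_arctan_le_abs (x : ℝ) : |arctan x| ≤ |x| := by
  have arctan_le_self : ∀ x : ℝ, 0 ≤ x → arctan x ≤ x := fun x hx => by
    simpa only [tan_arctan] using le_tan (arctan_nonneg.2 hx) (arctan_lt_pi_div_two x)
  rcases le_total 0 x with hx | hx
  · rw [abs_of_nonneg (arctan_nonneg.2 hx), abs_of_nonneg hx]
    exact arctan_le_self x hx
  · rw [abs_of_nonpos (arctan_le_zero.2 hx), abs_of_nonpos hx, ← arctan_neg]
    exact arctan_le_self (-x) (neg_nonneg.2 hx)

lemma abs_log_le_two_mul_abs_sub_one {x : ℝ} (hx : 1 / 2 ≤ x) : |log x| ≤ 2 * |x - 1| := by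
  have hx0 : 0 < x := by linarith
  have hlow : (x - 1) / x ≤ log x := by
    simpa only [sub_div, div_self hx0.ne', one_div] using one_sub_inv_le_log_of_pos hx0
  have hup := log_le_sub_one_of_pos hx0
  rw [div_le_iff₀ hx0] at hlow
  rw [abs_le]
  constructor <;> cases abs_cases (x - 1) <;> nlinarith

lemma abs_apply_le_mnorm (M : Matrix (Fin 2) (Fin 2) ℝ) (i j : Fin 2) : |M i j| ≤ mnorm M := by
  fin_cases i <;> fin_cases j <;> simp [mnorm]

lemma mnorm_nonneg (M : Matrix (Fin 2) (Fin 2) ℝ) : 0 ≤ mnorm M :=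
  (abs_nonneg _).trans (abs_apply_le_mnorm M 0 0)

lemma abs_apply_sub_one_apply_le_mnorm (M : Matrix (Fin 2) (Fin 2) ℝ) :
    |M 0 0 - 1| ≤ mnorm (M - 1) ∧ |M 0 1| ≤ mnorm (M - 1) ∧ |M 1 0| ≤ mnorm (M - 1) ∧
      |M 1 1 - 1| ≤ mnorm (M - 1) := by
  refine ⟨?_, ?_, ?_, ?_⟩
  · simpa using abs_apply_le_mnorm (M - 1) 0 0
  · simpa using abs_apply_le_mnorm (M - 1) 0 1
  · simpa using abs_apply_le_mnorm (M - 1) 1 0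
  · simpa using abs_apply_le_mnorm (M - 1) 1 1

lemma mnorm_le_of_forall_le {M : Matrix (Fin 2) (Fin 2) ℝ} {b : ℝ} (h : ∀ i j, |M i j| ≤ b) :
    mnorm M ≤ b :=
  max_le (max_le (h 0 0) (h 0 1)) (max_le (h 1 0) (h 1 1))

lemma mnorm_mul_le (P Q : Matrix (Fin 2) (Fin 2) ℝ) : mnorm (P * Q) ≤ 2 * mnorm P * mnorm Q := by
  refine mnorm_le_of_forall_le fun i j => ?_
  have hterm : ∀ k, |P i k * Q k j| ≤ mnorm P * mnorm Q := fun k => by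
    rw [abs_mul]
    exact mul_le_mul (abs_apply_le_mnorm P i k) (abs_apply_le_mnorm Q k j) (abs_nonneg _)
      (mnorm_nonneg P)
  rw [Matrix.mul_apply, Fin.sum_univ_two]
  linarith [abs_add_le (P i 0 * Q 0 j) (P i 1 * Q 1 j), hterm 0, hterm 1]

lemma mnorm_inv_of_det_eq_one {M : Matrix (Fin 2) (Fin 2) ℝ} (h : M.det = 1) :
    mnorm M⁻¹ = mnorm M := by
  rw [Matrix.inv_eq_left_inv (by rw [Matrix.adjugate_mul, h, one_smul]), Matrix.adjugate_fin_two]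
  simp [mnorm, abs_neg, max_comm, max_left_comm]

lemma mnorm_conj_sub_one_le (M : Matrix (Fin 2) (Fin 2) ℝ) {P : Matrix (Fin 2) (Fin 2) ℝ}
    (hP : P.det = 1) : mnorm (P⁻¹ * M * P - 1) ≤ 4 * mnorm P ^ 2 * mnorm (M - 1) := by
  have hconj : P⁻¹ * M * P - 1 = P⁻¹ * (M - 1) * P := by
    rw [Matrix.mul_sub, Matrix.sub_mul, Matrix.mul_one, Matrix.nonsing_inv_mul _ (by simp [hP])]
  calc mnorm (P⁻¹ * M * P - 1) ≤ 2 * mnorm (P⁻¹ * (M - 1)) * mnorm P := hconj ▸ mnorm_mul_le _ _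
    _ ≤ 2 * (2 * mnorm P⁻¹ * mnorm (M - 1)) * mnorm P := by
      gcongr
      · exact mnorm_nonneg P
      · exact mnorm_mul_le _ _
    _ = 4 * mnorm P ^ 2 * mnorm (M - 1) := by rw [mnorm_inv_of_det_eq_one hP]; ring

lemma sq_add_sq_of_mul_sin_of_mul_cos (r θ : ℝ) : (r * sin θ) ^ 2 + (r * cos θ) ^ 2 = r ^ 2 := by
  linear_combination r ^ 2 * sin_sq_add_cos_sq θ

lemma exists_mul_sin_arctan_div_eq {x y : ℝ} (hy : 0 < y) :
    ∃ r > 0, r * sin (arctan (x / y)) = x ∧ r * cos (arctan (x / y)) = y := by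
  have hcos_pos : 0 < cos (arctan (x / y)) := cos_arctan_pos _
  refine ⟨y / cos (arctan (x / y)), div_pos hy hcos_pos, ?_, div_mul_cancel₀ _ hcos_pos.ne'⟩
  calc y / cos (arctan (x / y)) * sin (arctan (x / y)) = y * tan (arctan (x / y)) := by
        rw [tan_eq_sin_div_cos]; ring
    _ = x := by rw [tan_arctan]; field_simp

lemma eq_n_mul_a_mul_K {B : Matrix (Fin 2) (Fin 2) ℝ} (hdet : B.det = 1) {r θ : ℝ} (hr : 0 < r)
    (hsin : r * sin θ = -B 1 0) (hcos : r * cos θ = B 1 1) :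
    B = n ((B 0 0 * B 1 0 + B 0 1 * B 1 1) / r ^ 2) * a (-2 * log r) * K θ := by
  have hexp : exp (-2 * log r / 2) = r⁻¹ := by
    rw [show -2 * log r / 2 = -log r by ring, exp_neg, exp_log hr]
  have hexp' : exp (-(-2 * log r) / 2) = r := by
    rw [show -(-2 * log r) / 2 = log r by ring, exp_log hr]
  have hr2 : r ^ 2 = B 1 0 ^ 2 + B 1 1 ^ 2 := by
    rw [← sq_add_sq_of_mul_sin_of_mul_cos r θ, hsin, hcos, neg_sq]
  have hs : sin θ = -B 1 0 / r := by rw [← hsin]; field_simp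
  have hc : cos θ = B 1 1 / r := by rw [← hcos]; field_simp
  rw [Matrix.det_fin_two] at hdet
  rw [n, a, K, hexp, hexp', hs, hc, Matrix.mul_fin_two, Matrix.mul_fin_two]
  ext i j
  fin_cases i <;> fin_cases j <;>
    simp only [Fin.zero_eta, Fin.isValue, Fin.mk_one, one_mul, mul_zero, add_zero, zero_add, mul_neg,
      zero_mul, of_apply, cons_val', cons_val_zero, cons_val_one, cons_val_fin_one] <;>
    field_simp
  · linear_combination B 0 0 * hr2 + B 1 1 * hdet
  · linear_combination B 0 1 * hr2 - B 1 0 * hdet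

lemma exists_eq_n_mul_a_mul_K_of_mnorm_sub_one_le {B : Matrix (Fin 2) (Fin 2) ℝ}
    (hdet : B.det = 1) (hB : mnorm (B - 1) ≤ 1 / 4) :
    ∃ t y θ : ℝ, |t| ≤ 8 * mnorm (B - 1) ∧ |y| ≤ 8 * mnorm (B - 1) ∧ |θ| ≤ 8 * mnorm (B - 1) ∧
      B = n t * a y * K θ := by
  obtain ⟨h00, h01, h10, h11⟩ := abs_apply_sub_one_apply_le_mnorm B
  set κ := mnorm (B - 1)
  have hκ : 0 ≤ κ := mnorm_nonneg _
  obtain ⟨h00l, h00r⟩ := abs_le.1 h00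
  obtain ⟨h10l, h10r⟩ := abs_le.1 h10
  obtain ⟨h11l, h11r⟩ := abs_le.1 h11
  have hd : 3 / 4 ≤ B 1 1 := by linarith
  obtain ⟨r, hr, hsin, hcos⟩ := exists_mul_sin_arctan_div_eq (x := -B 1 0) (by linarith : 0 < B 1 1)
  set θ := arctan (-B 1 0 / B 1 1)
  have hr2 : r ^ 2 = B 1 0 ^ 2 + B 1 1 ^ 2 := by
    rw [← sq_add_sq_of_mul_sin_of_mul_cos r θ, hsin, hcos, neg_sq]
  refine ⟨_, _, θ, ?_, ?_, ?_, eq_n_mul_a_mul_K hdet hr hsin hcos⟩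
  · have hnum : |B 0 0 * B 1 0 + B 0 1 * B 1 1| ≤ 5 / 2 * κ := by
      calc |B 0 0 * B 1 0 + B 0 1 * B 1 1| ≤ |B 0 0| * |B 1 0| + |B 0 1| * |B 1 1| := by
            rw [← abs_mul, ← abs_mul]; exact abs_add_le _ _
        _ ≤ 5 / 4 * κ + κ * (5 / 4) := by
            gcongr
            · exact abs_le.2 ⟨by linarith, by linarith⟩
            · exact abs_le.2 ⟨by linarith, by linarith⟩
        _ = 5 / 2 * κ := by ring
    have hr2_ge : 9 / 16 ≤ r ^ 2 := by nlinarith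
    rw [abs_div, abs_of_pos (pow_pos hr 2), div_le_iff₀ (pow_pos hr 2)]
    nlinarith [mul_le_mul_of_nonneg_left hr2_ge hκ]
  · have hr2_sub_one : |r ^ 2 - 1| ≤ 3 * κ := by
      rw [hr2, abs_le]
      constructor <;> nlinarith
    calc |-2 * log r| = |log (r ^ 2)| := by rw [log_pow, neg_mul, abs_neg]; norm_num
      _ ≤ 2 * |r ^ 2 - 1| := abs_log_le_two_mul_abs_sub_one (by nlinarith)
      _ ≤ 8 * κ := by linarith
  · calc |θ| ≤ |-B 1 0 / B 1 1| := abs_arctan_le_abs _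
      _ ≤ 8 * κ := by
        rw [abs_div, abs_neg, abs_of_pos (by linarith : 0 < B 1 1), div_le_iff₀ (by linarith)]
        nlinarith

lemma det_ω {T u : ℝ} (h : 0 < 1 + u / T) : (ω T u).det = 1 := by
  rw [ω, Matrix.det_fin_two_of, mul_zero, sub_zero, ← rpow_add h]
  norm_num

lemma mnorm_ω_le {T u : ℝ} (hT : 1 ≤ T) (hu : 0 ≤ u) : mnorm (ω T u) ≤ 1 + u := by
  have hv1 : 1 ≤ 1 + u / T := le_add_of_nonneg_right (by positivity)
  have hvu : 1 + u / T ≤ 1 + u := by gcongr; exact div_le_self hu hT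
  have hsqrt : (1 + u / T) ^ ((1 : ℝ) / 2) ≤ 1 + u := by
    refine le_trans ?_ hvu
    simpa using rpow_le_rpow_of_exponent_le hv1 (by norm_num : (1 : ℝ) / 2 ≤ 1)
  have hinv : (1 + u / T) ^ (-(1 : ℝ) / 2) ≤ 1 := rpow_le_one_of_one_le_of_nonpos hv1 (by norm_num)
  have hinv0 : 0 ≤ (1 + u / T) ^ (-(1 : ℝ) / 2) := by positivity
  refine mnorm_le_of_forall_le fun i j => ?_
  fin_cases i <;> fin_cases j <;>
    simp only [ω, neg_mul, Fin.zero_eta, Fin.isValue, Fin.mk_one, of_apply, cons_val', cons_val_zero,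
      cons_val_one, cons_val_fin_one, abs_neg, abs_mul, abs_zero]
  · rw [abs_of_nonneg (by positivity)]
    exact hsqrt
  · rw [abs_of_nonneg hu, abs_of_nonneg hinv0]
    nlinarith
  · positivity
  · rw [abs_of_nonneg hinv0]
    linarith

lemma rpow_neg_le_inv_of_rpow_inv_le {T c ε : ℝ} (hc : 0 < c) (hε : 0 < ε) (hT : c ^ ε⁻¹ ≤ T) :
    T ^ (-ε) ≤ c⁻¹ := by
  have hT0 : 0 ≤ T := (rpow_nonneg hc.le _).trans hT
  rw [rpow_neg hT0]
  exact inv_anti₀ hc ((rpow_inv_le_iff_of_pos hc.le hT0 hε).1 hT)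

/-- Slow divergence of the approximate horocycle `{(-1+i/T)t}`. -/
theorem stmt2 :
    ∃ c' > (0 : ℝ), ∀ η : ℝ, 0 < η → ∀ ε : ℝ, 0 < ε → ε < 1 - 3 * η →
      ∃ T₀ > (0 : ℝ), ∀ T : ℝ, T₀ ≤ T →
        ∀ A : Matrix (Fin 2) (Fin 2) ℝ, A.det = 1 →
          mnorm (A - 1) ≤ T ^ (-(2 * η + ε)) →
            ∀ u : ℝ, 0 ≤ u → u ≤ T ^ η →
              ∃ t' y' θ' : ℝ, |t'| ≤ c' * T ^ (-ε) ∧ |y'| ≤ c' * T ^ (-ε) ∧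
                |θ'| ≤ c' * T ^ (-ε) ∧
                (ω T u)⁻¹ * A * ω T u = n t' * a y' * K θ' := by
  refine ⟨128, by norm_num, fun η hη ε hε _ => ⟨max 1 (64 ^ ε⁻¹), by positivity, ?_⟩⟩
  intro T hT A hA hA_near u hu hu_le
  have hT1 : 1 ≤ T := le_of_max_le_left hT
  have hTε : T ^ (-ε) ≤ 64⁻¹ := rpow_neg_le_inv_of_rpow_inv_le (by norm_num) hε (le_of_max_le_right hT)
  have hω : (ω T u).det = 1 := det_ω (by positivity)
  have hconj : mnorm ((ω T u)⁻¹ * A * ω T u - 1) ≤ 16 * T ^ (-ε) := by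
    have hωT : mnorm (ω T u) ≤ 2 * T ^ η := by
      linarith [mnorm_ω_le hT1 hu, one_le_rpow hT1 hη.le]
    calc mnorm ((ω T u)⁻¹ * A * ω T u - 1) ≤ 4 * mnorm (ω T u) ^ 2 * mnorm (A - 1) :=
          mnorm_conj_sub_one_le A hω
      _ ≤ 4 * (2 * T ^ η) ^ 2 * T ^ (-(2 * η + ε)) := by
          gcongr <;> exact mnorm_nonneg _
      _ = 16 * (T ^ η * T ^ η * T ^ (-(2 * η + ε))) := by ring
      _ = 16 * T ^ (-ε) := by
          rw [← rpow_add (by positivity), ← rpow_add (by positivity)]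
          ring_nf
  have hdet : ((ω T u)⁻¹ * A * ω T u).det = 1 := by
    rw [Matrix.det_conj' ((Matrix.isUnit_iff_isUnit_det _).2 (hω ▸ isUnit_one)), hA]
  obtain ⟨t', y', θ', ht', hy', hθ', hdecomp⟩ :=
    exists_eq_n_mul_a_mul_K_of_mnorm_sub_one_le hdet (by linarith)
  exact ⟨t', y', θ', by linarith, by linarith, by linarith, hdecomp⟩
end

section
/- Let f be a continuous function on the upper half plane, k ∈ ℤ, C₁ > 0, C₂ ∈ ℂ with C₂ ≠ 0, and M, a > 0. Assume f(−C₁/z) = C₂ z^k f(z) for all z in the upper half plane and |f(z)| ≤ M e^{−a·Im z} for all z in the upper half plane. Let s₀ ∈ ℝ and γ > 0. Then there exists a constant c > 0 (depending only on f's data a, C₁, C₂, k, M, on s₀, and on γ, with c = O(1+γ)) such that for every T ≥ 2 and all d₁, d₂ ≥ c, setting s = s₀ + iT and α = −1 + i/T, the integral ∫_0^∞ f(αt) t^{s−1} dt converges absolutely and | ∫_0^∞ f(αt) t^{s−1} dt − ∫_{1/(d₁ T log T)}^{d₂ T log T} f(αt) t^{s−1} dt | ≤ c·T^{−γ}. 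-/
open Real MeasureTheory intervalIntegral

open Set
open scoped Nat

/-!
On the ray `t ↦ α t`, `α = -1 + i/T`, we have `Im (α t) = t/T`, so the growth bound makes the
integrand decay like `exp (-a t/T)` as `t → ∞`. As `t → 0`, the functional equation transfers
the bound at `-C₁/(α t)`, whose imaginary part is at least `C₁/(4 T t)` since `‖α‖ ≤ 2`, into
a decay `exp (-a C₁/(4 T t))`. Powers of `t` are absorbed by halving these exponentials, so
with `p = ⌈s₀ - 1⌉` and `q = ⌈k + 1 - s₀⌉` the pieces cut off below `1/(d₁ T log T)` and
above `d₂ T log T` are `O(T ^ (q - a C₁ d₁/8))` and `O(T ^ (p + 1 - a d₂/2))`,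
which is `O(T ^ (-γ))` once `d₁, d₂` are large.
-/

lemma pow_mul_exp_neg_mul_le {x μ : ℝ} (hx : 0 ≤ x) (hμ : 0 < μ) (n : ℕ) :
    x ^ n * exp (-μ * x) ≤ n ! * (2 / μ) ^ n * exp (-(μ / 2) * x) := by
  have hpow : (μ / 2 * x) ^ n ≤ n ! * exp (μ / 2 * x) :=
    (div_le_iff₀' (by positivity)).mp (pow_div_factorial_le_exp _ (by positivity) n)
  calc x ^ n * exp (-μ * x) = (2 / μ) ^ n * (μ / 2 * x) ^ n * exp (-μ * x) := by
        rw [← mul_pow]; field_simp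
    _ ≤ (2 / μ) ^ n * (n ! * exp (μ / 2 * x)) * exp (-μ * x) := by gcongr
    _ = n ! * (2 / μ) ^ n * exp (-(μ / 2) * x) := by
        rw [mul_assoc, mul_assoc, ← exp_add]; ring_nf

lemma zpow_le_two_pow_natAbs {x : ℝ} (h1 : 1 ≤ x) (h2 : x ≤ 2) (m : ℤ) :
    x ^ m ≤ 2 ^ m.natAbs := by
  rcases le_or_gt 0 m with hm | hm
  · lift m to ℕ using hm
    simpa using pow_le_pow_left₀ (by linarith) h2 m
  · exact (zpow_le_one_of_nonpos₀ h1 hm.le).trans (one_le_pow₀ (by norm_num))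

lemma mul_pow_mul_exp_neg_mul_log_le {K T κ γ : ℝ} {m : ℕ} (hK : 0 ≤ K) (hT : 1 ≤ T)
    (h : m + γ ≤ κ) : K * T ^ m * exp (-κ * log T) ≤ K * T ^ (-γ) := by
  have hT0 : 0 < T := one_pos.trans_le hT
  rw [mul_assoc, ← rpow_natCast, show exp (-κ * log T) = T ^ (-κ) by
    rw [rpow_def_of_pos hT0, mul_comm], ← rpow_add hT0]
  gcongr
  linarith

lemma Complex.im_neg_ofReal_div (C : ℝ) (z : ℂ) : (-(C : ℂ) / z).im = C * z.im / ‖z‖ ^ 2 := by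
  rw [Complex.div_im, Complex.sq_norm]; simp [neg_div]

lemma one_le_norm_neg_one_add_I_div {T : ℝ} : 1 ≤ ‖-1 + Complex.I / T‖ := by
  simpa using Complex.abs_re_le_norm (-1 + Complex.I / T)

lemma norm_neg_one_add_I_div_le_two {T : ℝ} (hT : 1 ≤ T) : ‖-1 + Complex.I / T‖ ≤ 2 := by
  calc ‖-1 + Complex.I / T‖ ≤ ‖(-1 : ℂ)‖ + ‖Complex.I / T‖ := norm_add_le _ _
    _ ≤ 2 := by
        rw [norm_div, Complex.norm_real, norm_of_nonneg (by linarith)]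
        simp only [norm_neg, norm_one, Complex.norm_I]
        linarith [(div_le_one₀ (by linarith)).mpr hT]

section TruncatedIntegral

variable {E : Type*} [NormedAddCommGroup E] {g : ℝ → E} {A B ν μ ε X : ℝ}

lemma integrableOn_Ioi_zero_of_norm_le_exp (hg : ContinuousOn g (Ioi 0)) (hν : 0 ≤ ν)
    (hμ : 0 < μ) (hsmall : ∀ t, 0 < t → t ≤ 1 → ‖g t‖ ≤ A * exp (-ν / t))
    (hlarge : ∀ t, 1 ≤ t → ‖g t‖ ≤ B * exp (-μ * t)) :
    IntegrableOn g (Ioi 0) := by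
  rw [← Ioc_union_Ioi_eq_Ioi zero_le_one, integrableOn_union]
  constructor
  · refine Integrable.mono' (integrableOn_const (C := A) measure_Ioc_lt_top.ne)
      (hg.mono Ioc_subset_Ioi_self |>.aestronglyMeasurable measurableSet_Ioc) ?_
    filter_upwards [ae_restrict_mem measurableSet_Ioc] with t ⟨ht0, ht1⟩
    have hA : 0 ≤ A := nonneg_of_mul_nonneg_left ((norm_nonneg _).trans (hsmall t ht0 ht1))
      (exp_pos _)
    calc ‖g t‖ ≤ A * exp (-ν / t) := hsmall t ht0 ht1
      _ ≤ A * 1 := by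
          gcongr
          exact exp_le_one_iff.mpr (div_nonpos_of_nonpos_of_nonneg (neg_nonpos.mpr hν) ht0.le)
      _ = A := mul_one A
  · refine Integrable.mono' ((exp_neg_integrableOn_Ioi 1 hμ).const_mul B)
      (hg.mono (Ioi_subset_Ioi zero_le_one) |>.aestronglyMeasurable measurableSet_Ioi) ?_
    filter_upwards [ae_restrict_mem measurableSet_Ioi] with t ht
    simpa [neg_mul] using hlarge t (le_of_lt ht)

lemma integral_Ioi_zero_sub_intervalIntegral [NormedSpace ℝ E] (hg : IntegrableOn g (Ioi 0))
    (hε : 0 ≤ ε) (hεX : ε ≤ X) :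
    (∫ t in Ioi 0, g t) - ∫ t in ε..X, g t = (∫ t in Ioc 0 ε, g t) + ∫ t in Ioi X, g t := by
  have hgε : IntegrableOn g (Ioi ε) := hg.mono_set (Ioi_subset_Ioi hε)
  rw [← Ioc_union_Ioi_eq_Ioi hε, setIntegral_union (Ioc_disjoint_Ioi le_rfl) measurableSet_Ioi
      (hg.mono_set Ioc_subset_Ioi_self) hgε,
    ← Ioc_union_Ioi_eq_Ioi hεX, setIntegral_union (Ioc_disjoint_Ioi le_rfl) measurableSet_Ioi
      (hgε.mono_set Ioc_subset_Ioi_self) (hgε.mono_set (Ioi_subset_Ioi hεX)),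
    integral_of_le hεX]
  abel

lemma norm_setIntegral_Ioc_zero_le [NormedSpace ℝ E] (hν : 0 ≤ ν) (hε : 0 < ε) (hε1 : ε ≤ 1)
    (hsmall : ∀ t, 0 < t → t ≤ 1 → ‖g t‖ ≤ A * exp (-ν / t)) :
    ‖∫ t in Ioc 0 ε, g t‖ ≤ A * exp (-ν / ε) := by
  have hA : 0 ≤ A :=
    nonneg_of_mul_nonneg_left ((norm_nonneg _).trans (hsmall ε hε hε1)) (exp_pos _)
  have hbound : ∀ t ∈ Ioc 0 ε, ‖g t‖ ≤ A * exp (-ν / ε) := fun t ⟨ht0, htε⟩ ↦ by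
    refine (hsmall t ht0 (htε.trans hε1)).trans ?_
    gcongr A * ?_
    rw [exp_le_exp, neg_div, neg_div, neg_le_neg_iff]
    exact div_le_div_of_nonneg_left hν ht0 htε
  calc ‖∫ t in Ioc 0 ε, g t‖ ≤ A * exp (-ν / ε) * volume.real (Ioc 0 ε) :=
        norm_setIntegral_le_of_norm_le_const measure_Ioc_lt_top hbound
    _ ≤ A * exp (-ν / ε) * 1 := by
        gcongr
        rw [Real.volume_real_Ioc_of_le hε.le]
        linarith
    _ = A * exp (-ν / ε) := mul_one _

lemma norm_setIntegral_Ioi_le [NormedSpace ℝ E] (hg : IntegrableOn g (Ioi X)) (hμ : 0 < μ)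
    (hX : 1 ≤ X) (hlarge : ∀ t, 1 ≤ t → ‖g t‖ ≤ B * exp (-μ * t)) :
    ‖∫ t in Ioi X, g t‖ ≤ B * exp (-μ * X) / μ := by
  have hexp : IntegrableOn (fun t ↦ B * exp (-μ * t)) (Ioi X) := by
    simpa [IntegrableOn, neg_mul] using (exp_neg_integrableOn_Ioi X hμ).const_mul B
  calc ‖∫ t in Ioi X, g t‖ ≤ ∫ t in Ioi X, ‖g t‖ := norm_integral_le_integral_norm _
    _ ≤ ∫ t in Ioi X, B * exp (-μ * t) :=
        setIntegral_mono_on hg.norm hexp measurableSet_Ioi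
          fun t ht ↦ hlarge t (hX.trans (le_of_lt ht))
    _ = B * exp (-μ * X) / μ := by
        rw [MeasureTheory.integral_const_mul, integral_exp_mul_Ioi (neg_lt_zero.mpr hμ)]
        field_simp

theorem norm_integral_Ioi_zero_sub_intervalIntegral_le [NormedSpace ℝ E]
    (hg : ContinuousOn g (Ioi 0)) (hν : 0 ≤ ν) (hμ : 0 < μ) (hsmall : ∀ t, 0 < t → t ≤ 1 → ‖g t‖ ≤ A * exp (-ν / t))
    (hlarge : ∀ t, 1 ≤ t → ‖g t‖ ≤ B * exp (-μ * t)) (hε : 0 < ε) (hε1 : ε ≤ 1) (hX : 1 ≤ X) :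
    ‖(∫ t in Ioi 0, g t) - ∫ t in ε..X, g t‖ ≤ A * exp (-ν / ε) + B * exp (-μ * X) / μ := by
  have hint := integrableOn_Ioi_zero_of_norm_le_exp hg hν hμ hsmall hlarge
  rw [integral_Ioi_zero_sub_intervalIntegral hint hε.le (hε1.trans hX)]
  exact (norm_add_le _ _).trans (add_le_add (norm_setIntegral_Ioc_zero_le hν hε hε1 hsmall)
    (norm_setIntegral_Ioi_le (hint.mono_set (Ioi_subset_Ioi (by linarith))) hμ hX hlarge))

end TruncatedIntegral

section FunctionalEquation

variable {f : ℂ → ℂ} {k : ℤ} {C₁ : ℝ} {C₂ : ℂ} {M a : ℝ}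

lemma nonneg_of_norm_le_mul_exp (hfb : ∀ z : ℂ, 0 < z.im → ‖f z‖ ≤ M * exp (-a * z.im)) :
    0 ≤ M :=
  nonneg_of_mul_nonneg_left ((norm_nonneg _).trans (hfb Complex.I (by simp))) (exp_pos _)

lemma norm_le_of_functional_eq (hC₁ : 0 < C₁) (hC₂ : C₂ ≠ 0)
    (hfe : ∀ z : ℂ, 0 < z.im → f (-(C₁ : ℂ) / z) = C₂ * z ^ k * f z)
    (hfb : ∀ z : ℂ, 0 < z.im → ‖f z‖ ≤ M * exp (-a * z.im)) {z : ℂ} (hz : 0 < z.im) :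
    ‖f z‖ ≤ M / ‖C₂‖ * ‖z‖ ^ (-k) * exp (-a * (C₁ * z.im / ‖z‖ ^ 2)) := by
  have hz0 : 0 < ‖z‖ := norm_pos_iff.mpr fun h ↦ by simp [h] at hz
  have hw : 0 < (-(C₁ : ℂ) / z).im := by rw [Complex.im_neg_ofReal_div]; positivity
  have h := hfb _ hw
  rw [hfe z hz, norm_mul, norm_mul, norm_zpow, Complex.im_neg_ofReal_div] at h
  have hC : 0 < ‖C₂‖ * ‖z‖ ^ k := by positivity
  calc ‖f z‖ = ‖C₂‖ * ‖z‖ ^ k * ‖f z‖ / (‖C₂‖ * ‖z‖ ^ k) := by field_simp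
    _ ≤ M * exp (-a * (C₁ * z.im / ‖z‖ ^ 2)) / (‖C₂‖ * ‖z‖ ^ k) := by gcongr
    _ = M / ‖C₂‖ * ‖z‖ ^ (-k) * exp (-a * (C₁ * z.im / ‖z‖ ^ 2)) := by
        rw [zpow_neg]; field_simp

lemma continuousOn_ray_mul_cpow (hfc : ContinuousOn f {z : ℂ | 0 < z.im}) {α : ℂ}
    (hα : 0 < α.im) (s : ℂ) :
    ContinuousOn (fun t : ℝ ↦ f (α * t) * (t : ℂ) ^ (s - 1)) (Ioi 0) := by
  refine (hfc.comp (by fun_prop) fun t (ht : 0 < t) ↦ ?_).mul fun t ht ↦ ?_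
  · simpa using mul_pos hα ht
  · exact ((continuousAt_cpow_const (Complex.ofReal_mem_slitPlane.mpr ht)).comp
      Complex.continuous_ofReal.continuousAt).continuousWithinAt

lemma norm_ray_mul_cpow_le_of_one_le
    (hfb : ∀ z : ℂ, 0 < z.im → ‖f z‖ ≤ M * exp (-a * z.im)) (ha : 0 < a) {α : ℂ}
    (hα : 0 < α.im) (s : ℂ) {t : ℝ} (ht : 1 ≤ t) :
    ‖f (α * t) * (t : ℂ) ^ (s - 1)‖ ≤
      M * ⌈s.re - 1⌉₊ ! * (2 / (a * α.im)) ^ ⌈s.re - 1⌉₊ * exp (-(a * α.im / 2) * t) := by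
  have ht0 : 0 < t := one_pos.trans_le ht
  have hM := nonneg_of_norm_le_mul_exp hfb
  have hf : ‖f (α * t)‖ ≤ M * exp (-(a * α.im) * t) := by
    simpa [mul_assoc] using hfb (α * t) (by simpa using mul_pos hα ht0)
  have hpow : t ^ (s.re - 1) ≤ t ^ ⌈s.re - 1⌉₊ := by
    rw [← rpow_natCast]; exact rpow_le_rpow_of_exponent_le ht (Nat.le_ceil _)
  calc ‖f (α * t) * (t : ℂ) ^ (s - 1)‖ = ‖f (α * t)‖ * t ^ (s.re - 1) := by
        rw [norm_mul, Complex.norm_cpow_eq_rpow_re_of_pos ht0]; simp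
    _ ≤ M * exp (-(a * α.im) * t) * t ^ ⌈s.re - 1⌉₊ :=
        mul_le_mul hf hpow (by positivity) ((norm_nonneg _).trans hf)
    _ = M * (t ^ ⌈s.re - 1⌉₊ * exp (-(a * α.im) * t)) := by ring
    _ ≤ M * (⌈s.re - 1⌉₊ ! * (2 / (a * α.im)) ^ ⌈s.re - 1⌉₊ * exp (-(a * α.im / 2) * t)) :=
        mul_le_mul_of_nonneg_left (pow_mul_exp_neg_mul_le ht0.le (by positivity) _) hM
    _ = _ := by ring

lemma norm_ray_mul_cpow_le_of_le_one (hC₁ : 0 < C₁) (hC₂ : C₂ ≠ 0)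
    (hfe : ∀ z : ℂ, 0 < z.im → f (-(C₁ : ℂ) / z) = C₂ * z ^ k * f z)
    (hfb : ∀ z : ℂ, 0 < z.im → ‖f z‖ ≤ M * exp (-a * z.im)) {α : ℂ} (hα : 0 < α.im) {ν : ℝ}
    (hν : 0 < ν) (hνα : ν * ‖α‖ ^ 2 ≤ a * C₁ * α.im) (s : ℂ) {t : ℝ} (ht0 : 0 < t)
    (ht1 : t ≤ 1) :
    ‖f (α * t) * (t : ℂ) ^ (s - 1)‖ ≤ M / ‖C₂‖ * ‖α‖ ^ (-k) * ⌈k + 1 - s.re⌉₊ ! *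
      (2 / ν) ^ ⌈k + 1 - s.re⌉₊ * exp (-(ν / 2) / t) := by
  set q := ⌈k + 1 - s.re⌉₊
  have hM := nonneg_of_norm_le_mul_exp hfb
  have hα0 : 0 < ‖α‖ := norm_pos_iff.mpr fun h ↦ by simp [h] at hα
  have hz : 0 < (α * t).im := by simpa using mul_pos hα ht0
  have hnorm : ‖α * t‖ = ‖α‖ * t := by rw [norm_mul, Complex.norm_real, norm_of_nonneg ht0.le]
  have hexp : exp (-a * (C₁ * (α * t).im / ‖α * t‖ ^ 2)) ≤ exp (-ν * t⁻¹) := by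
    rw [exp_le_exp, hnorm, show -a * (C₁ * (α * t).im / (‖α‖ * t) ^ 2) =
      -(a * C₁ * α.im / ‖α‖ ^ 2) * t⁻¹ by simp; field_simp, neg_mul, neg_mul, neg_le_neg_iff]
    gcongr
    rwa [le_div_iff₀ (by positivity)]
  have hpow : t ^ (-k) * t ^ (s.re - 1) ≤ t⁻¹ ^ q := by
    rw [← rpow_intCast, ← rpow_add ht0, ← rpow_natCast,
      show (-k : ℤ) + (s.re - 1) = -(k + 1 - s.re) by push_cast; ring,
      rpow_neg ht0.le, ← inv_rpow ht0.le]
    exact rpow_le_rpow_of_exponent_le ((one_le_inv₀ ht0).mpr ht1) (Nat.le_ceil _)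
  calc ‖f (α * t) * (t : ℂ) ^ (s - 1)‖ = ‖f (α * t)‖ * t ^ (s.re - 1) := by
        rw [norm_mul, Complex.norm_cpow_eq_rpow_re_of_pos ht0]; simp
    _ ≤ M / ‖C₂‖ * ‖α * t‖ ^ (-k) * exp (-ν * t⁻¹) * t ^ (s.re - 1) := by
        gcongr
        exact (norm_le_of_functional_eq hC₁ hC₂ hfe hfb hz).trans (by gcongr)
    _ = M / ‖C₂‖ * ‖α‖ ^ (-k) * (t ^ (-k) * t ^ (s.re - 1) * exp (-ν * t⁻¹)) := by
        rw [hnorm, mul_zpow]; ring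
    _ ≤ M / ‖C₂‖ * ‖α‖ ^ (-k) * (q ! * (2 / ν) ^ q * exp (-(ν / 2) * t⁻¹)) := by
        gcongr M / ‖C₂‖ * ‖α‖ ^ (-k) * ?_
        exact (mul_le_mul_of_nonneg_right hpow (exp_pos _).le).trans
          (pow_mul_exp_neg_mul_le (inv_nonneg.mpr ht0.le) hν q)
    _ = _ := by rw [← div_eq_mul_inv]; ring

lemma norm_integrand_le_of_le_one (hC₁ : 0 < C₁) (hC₂ : C₂ ≠ 0)
    (hfe : ∀ z : ℂ, 0 < z.im → f (-(C₁ : ℂ) / z) = C₂ * z ^ k * f z)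
    (hfb : ∀ z : ℂ, 0 < z.im → ‖f z‖ ≤ M * exp (-a * z.im)) (ha : 0 < a) {T : ℝ} (hT : 1 ≤ T)
    (s : ℂ) {t : ℝ} (ht0 : 0 < t) (ht1 : t ≤ 1) :
    ‖f ((-1 + Complex.I / T) * t) * (t : ℂ) ^ (s - 1)‖ ≤ M / ‖C₂‖ * 2 ^ k.natAbs *
      ⌈k + 1 - s.re⌉₊ ! * (8 / (a * C₁)) ^ ⌈k + 1 - s.re⌉₊ * T ^ ⌈k + 1 - s.re⌉₊ *
        exp (-(a * C₁ / (8 * T)) / t) := by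
  set α := -1 + Complex.I / T
  have hT0 : 0 < T := one_pos.trans_le hT
  have hαim : α.im = 1 / T := by simp [α]
  have hM := nonneg_of_norm_le_mul_exp hfb
  have hνα : a * C₁ / (4 * T) * ‖α‖ ^ 2 ≤ a * C₁ * α.im :=
    calc a * C₁ / (4 * T) * ‖α‖ ^ 2 ≤ a * C₁ / (4 * T) * 2 ^ 2 := by
          gcongr; exact norm_neg_one_add_I_div_le_two hT
      _ = a * C₁ * α.im := by rw [hαim]; field_simp; norm_num
  have hαk : ‖α‖ ^ (-k) ≤ 2 ^ k.natAbs := by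
    simpa using zpow_le_two_pow_natAbs one_le_norm_neg_one_add_I_div
      (norm_neg_one_add_I_div_le_two hT) (-k)
  calc ‖f (α * t) * (t : ℂ) ^ (s - 1)‖
      ≤ M / ‖C₂‖ * ‖α‖ ^ (-k) * ⌈k + 1 - s.re⌉₊ ! * (2 / (a * C₁ / (4 * T))) ^ ⌈k + 1 - s.re⌉₊ *
          exp (-(a * C₁ / (4 * T) / 2) / t) :=
        norm_ray_mul_cpow_le_of_le_one hC₁ hC₂ hfe hfb (by rw [hαim]; positivity)
          (by positivity) hνα s ht0 ht1
    _ ≤ M / ‖C₂‖ * 2 ^ k.natAbs * ⌈k + 1 - s.re⌉₊ ! *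
          (2 / (a * C₁ / (4 * T))) ^ ⌈k + 1 - s.re⌉₊ * exp (-(a * C₁ / (4 * T) / 2) / t) := by
        gcongr
    _ = _ := by
        rw [show 2 / (a * C₁ / (4 * T)) = 8 / (a * C₁) * T by field_simp; ring, mul_pow,
          show a * C₁ / (4 * T) / 2 = a * C₁ / (8 * T) by field_simp; ring]
        ring

lemma norm_integrand_le_of_one_le (hfb : ∀ z : ℂ, 0 < z.im → ‖f z‖ ≤ M * exp (-a * z.im))
    (ha : 0 < a) {T : ℝ} (hT : 0 < T) (s : ℂ) {t : ℝ} (ht : 1 ≤ t) :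
    ‖f ((-1 + Complex.I / T) * t) * (t : ℂ) ^ (s - 1)‖ ≤
      M * ⌈s.re - 1⌉₊ ! * (2 / a) ^ ⌈s.re - 1⌉₊ * T ^ ⌈s.re - 1⌉₊ * exp (-(a / (2 * T)) * t) := by
  have h := norm_ray_mul_cpow_le_of_one_le hfb ha (α := -1 + Complex.I / T)
    (by simpa using hT) s ht
  rw [show (-1 + Complex.I / T).im = 1 / T by simp, show 2 / (a * (1 / T)) = 2 / a * T by
    field_simp, show a * (1 / T) / 2 = a / (2 * T) by field_simp, mul_pow] at h
  simpa only [mul_assoc] using h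

lemma norm_integral_Ioi_zero_sub_truncated_le (hfc : ContinuousOn f {z : ℂ | 0 < z.im})
    (hC₁ : 0 < C₁) (hC₂ : C₂ ≠ 0)
    (hfe : ∀ z : ℂ, 0 < z.im → f (-(C₁ : ℂ) / z) = C₂ * z ^ k * f z)
    (hfb : ∀ z : ℂ, 0 < z.im → ‖f z‖ ≤ M * exp (-a * z.im)) (ha : 0 < a) {T d₁ d₂ : ℝ}
    (hT : 2 ≤ T) (hd₁ : 1 ≤ d₁) (hd₂ : 1 ≤ d₂) (s : ℂ) :
    IntegrableOn (fun t : ℝ ↦ f ((-1 + Complex.I / T) * t) * (t : ℂ) ^ (s - 1)) (Ioi 0) ∧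
    ‖(∫ t in Ioi (0 : ℝ), f ((-1 + Complex.I / T) * t) * (t : ℂ) ^ (s - 1)) -
        ∫ t in (1 / (d₁ * T * log T))..(d₂ * T * log T),
          f ((-1 + Complex.I / T) * t) * (t : ℂ) ^ (s - 1)‖ ≤
      M / ‖C₂‖ * 2 ^ k.natAbs * ⌈k + 1 - s.re⌉₊ ! * (8 / (a * C₁)) ^ ⌈k + 1 - s.re⌉₊ *
          T ^ ⌈k + 1 - s.re⌉₊ * exp (-(a * C₁ * d₁ / 8) * log T) +
        M * ⌈s.re - 1⌉₊ ! * (2 / a) ^ (⌈s.re - 1⌉₊ + 1) * T ^ (⌈s.re - 1⌉₊ + 1) *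
          exp (-(a * d₂ / 2) * log T) := by
  have hT0 : 0 < T := by linarith
  have hL : 1 ≤ T * log T := by nlinarith [log_two_gt_d9, log_le_log (by norm_num) hT]
  have hd₁L : 1 ≤ d₁ * T * log T := by
    rw [mul_assoc]; exact one_le_mul_of_one_le_of_one_le hd₁ hL
  have hd₂L : 1 ≤ d₂ * T * log T := by
    rw [mul_assoc]; exact one_le_mul_of_one_le_of_one_le hd₂ hL
  have hcont := continuousOn_ray_mul_cpow hfc (α := -1 + Complex.I / T) (by simpa using hT0) s
  have hsmall := fun t ↦ norm_integrand_le_of_le_one hC₁ hC₂ hfe hfb ha (T := T) (by linarith) s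
    (t := t)
  have hlarge := fun t ↦ norm_integrand_le_of_one_le hfb ha hT0 s (t := t)
  have hν : 0 ≤ a * C₁ / (8 * T) := by positivity
  have hμ : 0 < a / (2 * T) := by positivity
  refine ⟨integrableOn_Ioi_zero_of_norm_le_exp hcont hν hμ hsmall hlarge, ?_⟩
  refine (norm_integral_Ioi_zero_sub_intervalIntegral_le hcont hν hμ hsmall hlarge
    (one_div_pos.mpr (by linarith)) (div_le_one_of_le₀ hd₁L (by linarith)) hd₂L).trans_eq ?_
  rw [show -(a * C₁ / (8 * T)) / (1 / (d₁ * T * log T)) = -(a * C₁ * d₁ / 8) * log T by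
    field_simp, show -(a / (2 * T)) * (d₂ * T * log T) = -(a * d₂ / 2) * log T by field_simp]
  congr 1
  rw [pow_succ, pow_succ]
  field_simp

end FunctionalEquation

theorem stmt12_general (f : ℂ → ℂ) (hfc : ContinuousOn f {z : ℂ | 0 < z.im}) (k : ℤ)
    (C₁ : ℝ) (hC₁ : 0 < C₁) (C₂ : ℂ) (hC₂ : C₂ ≠ 0) (M a : ℝ) (ha : 0 < a)
    (hfe : ∀ z : ℂ, 0 < z.im → f (-(C₁ : ℂ) / z) = C₂ * z ^ k * f z)
    (hfb : ∀ z : ℂ, 0 < z.im → ‖f z‖ ≤ M * Real.exp (-a * z.im))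
    (s₀ γ : ℝ) :
    ∃ c > (0 : ℝ), ∀ T : ℝ, 2 ≤ T → ∀ d₁ d₂ : ℝ, c ≤ d₁ → c ≤ d₂ →
      ∀ s : ℂ, s = (s₀ : ℂ) + Complex.I * T → ∀ α : ℂ, α = -1 + Complex.I / T →
        IntegrableOn (fun t : ℝ => f (α * t) * (t : ℂ) ^ (s - 1)) (Set.Ioi 0) ∧
        ‖(∫ t in Set.Ioi (0 : ℝ), f (α * t) * (t : ℂ) ^ (s - 1)) -
            ∫ t in (1 / (d₁ * T * Real.log T))..(d₂ * T * Real.log T),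
              f (α * t) * (t : ℂ) ^ (s - 1)‖ ≤ c * T ^ (-γ) := by
  have hM := nonneg_of_norm_le_mul_exp hfb
  set p := ⌈s₀ - 1⌉₊
  set q := ⌈k + 1 - s₀⌉₊
  set K₁ := M * p ! * (2 / a) ^ (p + 1)
  set K₂ := M / ‖C₂‖ * 2 ^ k.natAbs * q ! * (8 / (a * C₁)) ^ q
  set c := max (max 1 (K₁ + K₂)) (max (2 * (p + 1 + γ) / a) (8 * (q + γ) / (a * C₁)))
  refine ⟨c, by positivity, ?_⟩
  rintro T hT d₁ d₂ hd₁ hd₂ s rfl α rfl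
  have hc1 : 1 ≤ c := (le_max_left _ _).trans (le_max_left _ _)
  have hsre : ((s₀ : ℂ) + Complex.I * T).re = s₀ := by simp
  obtain ⟨hint, hbound⟩ := hsre ▸ norm_integral_Ioi_zero_sub_truncated_le hfc hC₁ hC₂ hfe hfb ha
    hT (hc1.trans hd₁) (hc1.trans hd₂) (s₀ + Complex.I * T)
  have hqd₁ : q + γ ≤ a * C₁ * d₁ / 8 := by
    have := (div_le_iff₀ (by positivity)).mp
      (((le_max_right _ _).trans (le_max_right _ _)).trans hd₁)
    linarith
  have hpd₂ : ((p + 1 : ℕ) : ℝ) + γ ≤ a * d₂ / 2 := by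
    have := (div_le_iff₀ ha).mp (((le_max_left _ _).trans (le_max_right _ _)).trans hd₂)
    push_cast
    linarith
  refine ⟨hint, hbound.trans ?_⟩
  calc _ ≤ K₂ * T ^ (-γ) + K₁ * T ^ (-γ) :=
        add_le_add (mul_pow_mul_exp_neg_mul_log_le (by positivity) (by linarith) hqd₁)
          (mul_pow_mul_exp_neg_mul_log_le (by positivity) (by linarith) hpd₂)
    _ ≤ c * T ^ (-γ) := by
        rw [← add_mul, add_comm]
        gcongr
        exact (le_max_right _ _).trans (le_max_left _ _)

theorem stmt12 (f : ℂ → ℂ) (hfc : ContinuousOn f {z : ℂ | 0 < z.im}) (k : ℤ)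
    (C₁ : ℝ) (hC₁ : 0 < C₁) (C₂ : ℂ) (hC₂ : C₂ ≠ 0) (M a : ℝ) (hM : 0 < M) (ha : 0 < a)
    (hfe : ∀ z : ℂ, 0 < z.im → f (-(C₁ : ℂ) / z) = C₂ * z ^ k * f z)
    (hfb : ∀ z : ℂ, 0 < z.im → ‖f z‖ ≤ M * Real.exp (-a * z.im))
    (s₀ γ : ℝ) (hγ : 0 < γ) :
    ∃ c > (0 : ℝ), ∀ T : ℝ, 2 ≤ T → ∀ d₁ d₂ : ℝ, c ≤ d₁ → c ≤ d₂ →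
      ∀ s : ℂ, s = (s₀ : ℂ) + Complex.I * T → ∀ α : ℂ, α = -1 + Complex.I / T →
        IntegrableOn (fun t : ℝ => f (α * t) * (t : ℂ) ^ (s - 1)) (Set.Ioi 0) ∧
        ‖(∫ t in Set.Ioi (0 : ℝ), f (α * t) * (t : ℂ) ^ (s - 1)) -
            ∫ t in (1 / (d₁ * T * Real.log T))..(d₂ * T * Real.log T),
              f (α * t) * (t : ℂ) ^ (s - 1)‖ ≤ c * T ^ (-γ) :=
  stmt12_general f hfc k C₁ hC₁ C₂ hC₂ M a ha hfe hfb s₀ γ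
end
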